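/- arXiv:2411.19399 — 2 statements merged into one kernel-verified Lean document; each statement's English description precedes it below -/
import Mathlib

section
/- For each real N ≥ 0 there exists a constant C_N > 0 such that |h_t(n)| ≤ C_N t^{-1/2} (1 + |n|/√t)^{-2N-1} for all t > 0 and all n ∈ ℤ with n = 0 or |n| > N. -/
/-- The discrete heat kernel on `ℤ`:
`h_t(n) = (1/π) ∫_0^π e^{-2t(1-cos θ)} cos(nθ) dθ`. -/
noncomputable def heatKernel (t : ℝ) (n : ℤ) : ℝ :=
  (1 / Real.pi) * ∫ θ in (0:ℝ)..Real.pi,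
    Real.exp (-2 * t * (1 - Real.cos θ)) * Real.cos ((n : ℝ) * θ)

open Real intervalIntegral MeasureTheory

noncomputable def fz (t : ℝ) (n : ℤ) (z : ℂ) : ℂ :=
  Complex.exp (-2*(t:ℂ)*(1 - Complex.cos z) + (n:ℂ) * Complex.I * z)

lemma fz_diff (t : ℝ) (n : ℤ) : Differentiable ℂ (fz t n) := by
  unfold fz; fun_prop

lemma fz_periodic (t : ℝ) (n : ℤ) (z : ℂ) : fz t n (z + 2*Real.pi) = fz t n z := by
  unfold fz
  rw [Complex.cos_add_two_pi,
    show -2*(t:ℂ)*(1 - Complex.cos z) + (n:ℂ)*Complex.I*(z+2*Real.pi)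
      = (-2*(t:ℂ)*(1 - Complex.cos z) + (n:ℂ)*Complex.I*z) + n*(2*Real.pi*Complex.I) by ring,
    Complex.exp_add, Complex.exp_int_mul_two_pi_mul_I, mul_one]

lemma shift_integral (t : ℝ) (n : ℤ) (lam : ℝ) :
    (∫ x : ℝ in (-Real.pi)..Real.pi, fz t n x) =
      ∫ x : ℝ in (-Real.pi)..Real.pi, fz t n (x + lam * Complex.I) := by
  have h := Complex.integral_boundary_rect_eq_zero_of_differentiableOn (fz t n)
    (⟨-Real.pi, 0⟩ : ℂ) (⟨Real.pi, lam⟩ : ℂ) ((fz_diff t n).differentiableOn)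
  have hv : ∀ y : ℝ, fz t n ((⟨Real.pi, lam⟩ : ℂ).re + y * Complex.I)
      = fz t n ((⟨-Real.pi, 0⟩ : ℂ).re + y * Complex.I) := by
    intro y
    have := fz_periodic t n ((-Real.pi : ℝ) + y * Complex.I)
    show fz t n ((Real.pi : ℂ) + y * Complex.I) = fz t n (((-Real.pi : ℝ) : ℂ) + y * Complex.I)
    rw [← this]
    congr 1
    push_cast
    ring
  simp only [hv, Complex.ofReal_zero, zero_mul, add_zero] at h
  have h2 : ((∫ x : ℝ in (-Real.pi)..Real.pi, fz t n x) -
      ∫ x : ℝ in (-Real.pi)..Real.pi, fz t n (x + lam * Complex.I)) = 0 := by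
    linear_combination h
  exact sub_eq_zero.mp h2

lemma fz_re (t : ℝ) (n : ℤ) (x : ℝ) :
    (fz t n (x : ℂ)).re = Real.exp (-2 * t * (1 - Real.cos x)) * Real.cos ((n:ℝ) * x) := by
  unfold fz
  rw [Complex.exp_re]
  congr 2
  · simp [Complex.cos_ofReal_re]
  · simp

lemma heatKernel_eq (t : ℝ) (n : ℤ) :
    heatKernel t n = (1/(2*Real.pi)) * (∫ x : ℝ in (-Real.pi)..Real.pi, fz t n x).re := by
  have hcont : Continuous (fun x : ℝ => fz t n (x:ℂ)) := by unfold fz; fun_prop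
  have hre : (∫ x : ℝ in (-Real.pi)..Real.pi, fz t n x).re
      = ∫ x : ℝ in (-Real.pi)..Real.pi, (fz t n (x:ℂ)).re :=
    (Complex.reCLM.intervalIntegral_comp_comm (hcont.intervalIntegrable _ _)).symm
  rw [hre]
  unfold heatKernel
  simp only [fz_re]
  set g : ℝ → ℝ := fun x => Real.exp (-2 * t * (1 - Real.cos x)) * Real.cos ((n:ℝ) * x) with hg
  have hgc : Continuous g := by rw [hg]; fun_prop
  have heven : ∀ x : ℝ, g (-x) = g x := by
    intro x; simp [hg, Real.cos_neg, mul_comm]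
  have h1 : (∫ x in (-Real.pi)..(0:ℝ), g x) = ∫ x in (0:ℝ)..Real.pi, g x := by
    have h := intervalIntegral.integral_comp_neg (a := (0:ℝ)) (b := Real.pi) (f := g)
    simp only [heven, neg_zero] at h
    exact h.symm
  have h2 : (∫ x in (-Real.pi)..Real.pi, g x)
      = (∫ x in (-Real.pi)..(0:ℝ), g x) + ∫ x in (0:ℝ)..Real.pi, g x :=
    (intervalIntegral.integral_add_adjacent_intervals
      (hgc.intervalIntegrable _ _) (hgc.intervalIntegrable _ _)).symm
  rw [h2, h1]
  have hpi : Real.pi ≠ 0 := Real.pi_ne_zero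
  field_simp
  ring

lemma fz_norm (t : ℝ) (n : ℤ) (lam x : ℝ) :
    ‖fz t n ((x:ℂ) + lam * Complex.I)‖
      = Real.exp (-2*t*(1 - Real.cos x * Real.cosh lam) - n*lam) := by
  unfold fz
  rw [Complex.norm_exp]
  congr 1
  rw [show ((x:ℂ) + lam * Complex.I) = (x:ℂ) + (lam:ℂ)*Complex.I by norm_num]
  rw [Complex.cos_add, Complex.cos_mul_I, Complex.sin_mul_I]
  simp [Complex.cosh_ofReal_re, Complex.sinh_ofReal_re, Complex.cos_ofReal_re, Complex.sin_ofReal_re]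
  ring

lemma one_sub_cos_ge (x : ℝ) (hx : |x| ≤ Real.pi) : x^2/6 ≤ 1 - Real.cos x := by
  have h := Real.cos_le_one_sub_mul_cos_sq hx
  have hpi : Real.pi^2 ≤ 12 := by nlinarith [Real.pi_lt_d2, Real.pi_pos]
  have hpi2 : (0:ℝ) < Real.pi^2 := by positivity
  have key : (1:ℝ)/6 ≤ 2/Real.pi^2 := by
    rw [div_le_div_iff₀ (by norm_num) hpi2]; nlinarith
  have h2 : x^2/6 ≤ (2/Real.pi^2)*x^2 := by
    calc x^2/6 = (1/6)*x^2 := by ring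
    _ ≤ (2/Real.pi^2)*x^2 := mul_le_mul_of_nonneg_right key (sq_nonneg x)
  linarith

lemma Kbound (s : ℝ) (hs : 0 < s) :
    (∫ x in (-Real.pi)..Real.pi, Real.exp (-2*s*(1 - Real.cos x)))
      ≤ 2 * Real.pi * s ^ (-(1/2) : ℝ) := by
  have hb : 0 < s/3 := by linarith
  have hmono : (∫ x in (-Real.pi)..Real.pi, Real.exp (-2*s*(1 - Real.cos x)))
      ≤ ∫ x in (-Real.pi)..Real.pi, Real.exp (-(s/3)*x^2) := by
    apply intervalIntegral.integral_mono_on (by linarith [Real.pi_pos])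
    · exact (by fun_prop : Continuous fun x : ℝ => Real.exp (-2*s*(1-Real.cos x))).intervalIntegrable _ _
    · exact (by fun_prop : Continuous fun x : ℝ => Real.exp (-(s/3)*x^2)).intervalIntegrable _ _
    · intro x hx
      apply Real.exp_le_exp.2
      have habs : |x| ≤ Real.pi := by rw [abs_le]; exact ⟨hx.1, hx.2⟩
      have := one_sub_cos_ge x habs
      nlinarith
  have hint : Integrable (fun x : ℝ => Real.exp (-(s/3)*x^2)) := integrable_exp_neg_mul_sq hb
  have hfull : (∫ x in (-Real.pi)..Real.pi, Real.exp (-(s/3)*x^2))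
      ≤ ∫ x : ℝ, Real.exp (-(s/3)*x^2) := by
    rw [intervalIntegral.integral_of_le (by linarith [Real.pi_pos])]
    exact setIntegral_le_integral hint (Filter.Eventually.of_forall fun x => by positivity)
  rw [integral_gaussian] at hfull
  have hsq : Real.sqrt (Real.pi / (s/3)) ≤ 2 * Real.pi * s ^ (-(1/2):ℝ) := by
    have hrw : s ^ (-(1/2):ℝ) = (Real.sqrt s)⁻¹ := by
      rw [Real.rpow_neg hs.le, Real.sqrt_eq_rpow]
    rw [hrw]
    have h2 : Real.sqrt (Real.pi/(s/3)) ≤ Real.sqrt ((2*Real.pi)^2/s) := by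
      apply Real.sqrt_le_sqrt
      rw [div_le_div_iff₀ (by positivity) hs]
      nlinarith [mul_le_mul_of_nonneg_right (mul_le_mul_of_nonneg_left Real.pi_gt_three.le Real.pi_pos.le) hs.le, mul_pos Real.pi_pos hs]
    calc Real.sqrt (Real.pi/(s/3)) ≤ Real.sqrt ((2*Real.pi)^2/s) := h2
    _ = 2*Real.pi * (Real.sqrt s)⁻¹ := by
        rw [Real.sqrt_div (by positivity) s, Real.sqrt_sq (by positivity)]
        ring
  linarith

lemma master (t lam : ℝ) (ht : 0 < t) (n : ℤ) :
    |heatKernel t n| ≤ (t * Real.cosh lam) ^ (-(1/2):ℝ) *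
      Real.exp (2*t*(Real.cosh lam - 1) - (n:ℝ)*lam) := by
  have hcosh : (1:ℝ) ≤ Real.cosh lam := Real.one_le_cosh lam
  set s : ℝ := t * Real.cosh lam with hsdef
  have hs : 0 < s := by
    have := Real.cosh_pos (x := lam); positivity
  set c : ℝ := 2*t*(Real.cosh lam - 1) - (n:ℝ)*lam with hcdef
  have hpi := Real.pi_pos
  have hptwo : (0:ℝ) < 1/(2*Real.pi) := by positivity
  have habs : ∀ x : ℝ, ‖fz t n ((x:ℂ) + lam * Complex.I)‖
      = Real.exp c * Real.exp (-2*s*(1-Real.cos x)) := by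
    intro x
    rw [fz_norm, ← Real.exp_add]
    congr 1
    rw [hcdef, hsdef]
    ring
  calc |heatKernel t n| = (1/(2*Real.pi)) * |(∫ x : ℝ in (-Real.pi)..Real.pi, fz t n x).re| := by
        rw [heatKernel_eq, abs_mul, abs_of_pos hptwo]
  _ ≤ (1/(2*Real.pi)) * ‖∫ x : ℝ in (-Real.pi)..Real.pi, fz t n x‖ :=
        mul_le_mul_of_nonneg_left (Complex.abs_re_le_norm _) hptwo.le
  _ = (1/(2*Real.pi)) * ‖∫ x : ℝ in (-Real.pi)..Real.pi,
        fz t n ((x:ℂ) + lam * Complex.I)‖ := by rw [shift_integral t n lam]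
  _ ≤ (1/(2*Real.pi)) * ∫ x in (-Real.pi)..Real.pi,
        ‖fz t n ((x:ℂ) + lam * Complex.I)‖ := by
        apply mul_le_mul_of_nonneg_left ?_ hptwo.le
        simpa using intervalIntegral.norm_integral_le_integral_norm
          (f := fun x : ℝ => fz t n ((x:ℂ) + lam * Complex.I)) (by linarith : -Real.pi ≤ Real.pi)
  _ = (1/(2*Real.pi)) * (Real.exp c * ∫ x in (-Real.pi)..Real.pi,
        Real.exp (-2*s*(1-Real.cos x))) := by
        simp only [habs]
        rw [intervalIntegral.integral_const_mul]
  _ ≤ (1/(2*Real.pi)) * (Real.exp c * (2 * Real.pi * s ^ (-(1/2):ℝ))) := by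
        apply mul_le_mul_of_nonneg_left ?_ hptwo.le
        exact mul_le_mul_of_nonneg_left (Kbound s hs) (Real.exp_nonneg c)
  _ = s ^ (-(1/2):ℝ) * Real.exp c := by
        field_simp

lemma heatKernel_neg (t : ℝ) (n : ℤ) : heatKernel t (-n) = heatKernel t n := by
  unfold heatKernel
  congr 1
  apply intervalIntegral.integral_congr
  intro x _
  push_cast
  rw [show -(n:ℝ) * x = -((n:ℝ)*x) by ring, Real.cos_neg]

lemma pow_le_factorial_mul_exp (y : ℝ) (hy : 0 ≤ y) (k : ℕ) :
    y^k ≤ (k.factorial : ℝ) * Real.exp y := by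
  have h1 : y^k / (k.factorial : ℝ) ≤ Real.exp y := by
    have h2 := Real.sum_le_exp_of_nonneg hy (k+1)
    refine le_trans ?_ h2
    exact Finset.single_le_sum (f := fun i => y^i / (i.factorial : ℝ))
      (fun i _ => by positivity) (Finset.self_mem_range_succ k)
  have hf : (0:ℝ) < (k.factorial : ℝ) := by positivity
  calc y^k = (y^k / k.factorial) * k.factorial := by field_simp
  _ ≤ Real.exp y * k.factorial := by
      exact mul_le_mul_of_nonneg_right h1 hf.le
  _ = _ := by ring

lemma cosh_sub_one_le (lam : ℝ) (h0 : 0 ≤ lam) (h1 : lam ≤ 1) :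
    Real.cosh lam - 1 ≤ 4 * lam^2 := by
  set E : ℝ := Real.exp lam with hE
  have hE1 : 1 ≤ E := Real.one_le_exp h0
  have hE3 : E ≤ 3 := by
    calc E ≤ Real.exp 1 := Real.exp_le_exp.2 h1
    _ ≤ 3 := by linarith [Real.exp_one_lt_d9]
  have hEm1 : E - 1 ≤ lam * E := by
    have := Real.add_one_le_exp (-lam)
    have h2 : E * (1 - lam) ≤ 1 := by
      have h3 : Real.exp lam * Real.exp (-lam) = 1 := by
        rw [← Real.exp_add]; norm_num
      nlinarith [Real.exp_nonneg lam]
    nlinarith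
  have hkey : E^2 + 1 - 2*E ≤ 8*lam^2*E := by
    nlinarith [sq_nonneg (E-1), sq_nonneg lam, mul_nonneg (mul_nonneg h0 h0) (by linarith : (0:ℝ) ≤ E)]
  rw [Real.cosh_eq, Real.exp_neg, ← hE]
  have hEpos : (0:ℝ) < E := by linarith
  have heq : (E + E⁻¹)/2 - 1 = (E^2 + 1 - 2*E)/(2*E) := by field_simp
  rw [heq, div_le_iff₀ (by linarith)]
  nlinarith

set_option maxHeartbeats 2000000 in
/-- For each real `N ≥ 0` there is `C_N > 0` with
`|h_t(n)| ≤ C_N t^{-1/2} (1 + |n|/√t)^{-2N-1}` for all `t > 0` and all `n ∈ ℤ`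
with `n = 0` or `|n| > N`. -/
theorem stmt1 (N : ℝ) (hN : 0 ≤ N) :
    ∃ C : ℝ, 0 < C ∧ ∀ (t : ℝ), 0 < t → ∀ n : ℤ, (n = 0 ∨ N < |(n : ℝ)|) →
      |heatKernel t n| ≤ C * t ^ (-(1/2) : ℝ) *
        (1 + |(n : ℝ)| / Real.sqrt t) ^ (-2 * N - 1) := by
  classical
  set k : ℕ := ⌈N⌉₊ + 2 with hkdef
  have hkN : N + 1 ≤ (k:ℝ) := by
    have := Nat.le_ceil N
    push_cast [hkdef]
    push_cast at this
    linarith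
  have hk1 : (1:ℝ) ≤ (k:ℝ) := by linarith
  set Cf : ℝ := (k.factorial : ℝ) * 32^k with hCf
  have hCf1 : (1:ℝ) ≤ Cf := by
    rw [hCf]
    have h1 : (1:ℝ) ≤ (k.factorial : ℝ) := by exact_mod_cast Nat.one_le_iff_ne_zero.2 (Nat.factorial_ne_zero k)
    have h2 : (1:ℝ) ≤ 32^k := one_le_pow₀ (by norm_num)
    nlinarith
  set C : ℝ := 2^((4*N+2 : ℝ)) * Cf with hCdef
  have hCpos : 0 < C := by
    rw [hCdef]; positivity
  refine ⟨C, hCpos, ?_⟩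
  intro t ht n hn
  set m : ℕ := n.natAbs with hmdef
  have ham : |(n:ℝ)| = (m:ℝ) := by
    rw [hmdef]
    rw [Nat.cast_natAbs]
    push_cast
    rfl
  have hhk : heatKernel t n = heatKernel t (m:ℤ) := by
    rcases Int.natAbs_eq n with h | h
    · rw [hmdef]; exact congrArg (heatKernel t) h
    · rw [hmdef]
      conv_lhs => rw [h]
      exact heatKernel_neg t _
  set a : ℝ := (m:ℝ) with hadef
  have ha0 : 0 ≤ a := by positivity
  rw [ham, hhk]
  have hsqt : 0 < Real.sqrt t := Real.sqrt_pos.2 ht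
  set x : ℝ := a / Real.sqrt t with hxdef
  have hx0 : 0 ≤ x := by positivity
  have h1x : 0 < 1 + x := by linarith
  have hexpo : (-2*N - 1 : ℝ) = -(2*N+1) := by ring
  have hM0 : (0:ℝ) ≤ 2*N+1 := by linarith
  have hrpowinv : (1+x) ^ (-2*N-1 : ℝ) = ((1+x)^(2*N+1 : ℝ))⁻¹ := by
    rw [hexpo, Real.rpow_neg h1x.le]
  have hmaster := fun lam => master t lam ht (m : ℤ)
  push_cast at hmaster
  have htm : (0:ℝ) < t ^ (-(1/2) : ℝ) := Real.rpow_pos_of_pos ht _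
  have hxp : (0:ℝ) < (1+x)^(2*N+1 : ℝ) := Real.rpow_pos_of_pos h1x _
  have hC21 : (2:ℝ)^(2*N+1:ℝ) ≤ C := by
    rw [hCdef]
    calc (2:ℝ)^(2*N+1:ℝ) ≤ 2^((4*N+2):ℝ) :=
      Real.rpow_le_rpow_of_exponent_le one_le_two (by linarith)
    _ = 2^((4*N+2):ℝ) * 1 := by ring
    _ ≤ _ := by
        apply mul_le_mul_of_nonneg_left hCf1 (by positivity)
  rcases le_or_gt x 1 with hx1 | hx1
  · -- Case 1
    have hb := hmaster 0
    simp only [Real.cosh_zero, mul_one, mul_zero, sub_self, sub_zero, Real.exp_zero] at hb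
    have hub : (1+x)^(2*N+1:ℝ) ≤ C := by
      refine le_trans (Real.rpow_le_rpow h1x.le (by linarith) hM0) hC21
    calc |heatKernel t (m:ℤ)| ≤ t ^ (-(1/2):ℝ) := hb
    _ = t ^ (-(1/2):ℝ) * 1 := by ring
    _ ≤ t ^ (-(1/2):ℝ) * (C * ((1+x)^(2*N+1:ℝ))⁻¹) := by
        apply mul_le_mul_of_nonneg_left ?_ htm.le
        rw [le_mul_inv_iff₀ hxp, one_mul]
        exact hub
    _ = C * t ^ (-(1/2):ℝ) * (1+x)^(-2*N-1:ℝ) := by rw [hrpowinv]; ring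
  · rcases le_or_gt a (16*t) with hat | hat
    · -- Case 2
      set lam : ℝ := a/(16*t) with hlam
      have hlam0 : 0 ≤ lam := by positivity
      have hlam1 : lam ≤ 1 := by
        rw [hlam, div_le_one (by linarith)]; linarith
      have hcosh1 : (1:ℝ) ≤ Real.cosh lam := Real.one_le_cosh lam
      have hb := hmaster lam
      have hx2 : x^2 = a^2/t := by
        rw [hxdef, div_pow, Real.sq_sqrt ht.le]
      have hml : (m:ℝ) * lam = a^2/(16*t) := by
        rw [hlam]
        show a * (a/(16*t)) = a^2/(16*t)
        ring
      have h8 : 2*t*(Real.cosh lam - 1) ≤ a^2/(32*t) := by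
        have h4 := cosh_sub_one_le lam hlam0 hlam1
        have hl2 : lam^2 = a^2/(256*t^2) := by
          rw [hlam, div_pow, show (16*t)^2 = 256*t^2 by ring]
        have : 2*t*(Real.cosh lam - 1) ≤ 2*t*(4*lam^2) := by nlinarith
        calc 2*t*(Real.cosh lam - 1) ≤ 2*t*(4*lam^2) := this
        _ = a^2/(32*t) := by rw [hl2]; field_simp; ring
      have hexple : 2*t*(Real.cosh lam - 1) - (m:ℝ)*lam ≤ -x^2/32 := by
        have : -x^2/32 = a^2/(32*t) - a^2/(16*t) := by rw [hx2]; ring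
        linarith
      have hb2 : |heatKernel t (m:ℤ)| ≤ t ^ (-(1/2):ℝ) * Real.exp (-x^2/32) := by
        refine hb.trans (mul_le_mul ?_ (Real.exp_le_exp.2 hexple) (Real.exp_nonneg _) htm.le)
        exact Real.rpow_le_rpow_of_nonpos ht (le_mul_of_one_le_right ht.le hcosh1) (by norm_num)
      have hee : Real.exp (-x^2/32) * Real.exp (x^2/32) = 1 := by
        rw [← Real.exp_add, show -x^2/32 + x^2/32 = 0 by ring, Real.exp_zero]
      have key2 : (1+x)^(2*N+1:ℝ) ≤ 2^(2*N+1:ℝ) * (32^k * (k.factorial:ℝ) * Real.exp (x^2/32)) := by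
        calc (1+x)^(2*N+1:ℝ) ≤ (2*x)^(2*N+1:ℝ) := Real.rpow_le_rpow h1x.le (by linarith) hM0
        _ = 2^(2*N+1:ℝ) * x^(2*N+1:ℝ) := Real.mul_rpow (by norm_num) hx0
        _ ≤ 2^(2*N+1:ℝ) * (32^k * (k.factorial:ℝ) * Real.exp (x^2/32)) := by
            apply mul_le_mul_of_nonneg_left ?_ (by positivity)
            calc x^(2*N+1:ℝ) ≤ x^(((2*k : ℕ)) : ℝ) :=
                Real.rpow_le_rpow_of_exponent_le (by linarith) (by push_cast; linarith [Nat.le_ceil N])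
            _ = (x^2)^k := by rw [Real.rpow_natCast, pow_mul]
            _ = 32^k * (x^2/32)^k := by
                rw [← mul_pow, mul_div_cancel₀ _ (by norm_num : (32:ℝ) ≠ 0)]
            _ ≤ 32^k * ((k.factorial:ℝ) * Real.exp (x^2/32)) := by
                exact mul_le_mul_of_nonneg_left
                  (pow_le_factorial_mul_exp _ (by positivity) k) (by positivity)
            _ = 32^k * (k.factorial:ℝ) * Real.exp (x^2/32) := by ring
      have hkey : Real.exp (-x^2/32) ≤ C * (1+x)^(-2*N-1 : ℝ) := by
        rw [hrpowinv, le_mul_inv_iff₀ hxp]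
        calc Real.exp (-x^2/32) * (1+x)^(2*N+1:ℝ)
            ≤ Real.exp (-x^2/32) * (2^(2*N+1:ℝ) * (32^k * (k.factorial:ℝ) * Real.exp (x^2/32))) :=
              mul_le_mul_of_nonneg_left key2 (Real.exp_nonneg _)
        _ = 2^(2*N+1:ℝ) * ((k.factorial:ℝ) * 32^k) * (Real.exp (-x^2/32) * Real.exp (x^2/32)) := by
              ring
        _ = 2^(2*N+1:ℝ) * Cf := by rw [hee, hCf]; ring
        _ ≤ C := by
              rw [hCdef]
              exact mul_le_mul_of_nonneg_right
                (Real.rpow_le_rpow_of_exponent_le one_le_two (by linarith)) (by linarith)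
      calc |heatKernel t (m:ℤ)| ≤ t ^ (-(1/2):ℝ) * Real.exp (-x^2/32) := hb2
      _ ≤ t ^ (-(1/2):ℝ) * (C * (1+x)^(-2*N-1:ℝ)) := mul_le_mul_of_nonneg_left hkey htm.le
      _ = C * t ^ (-(1/2):ℝ) * (1+x)^(-2*N-1:ℝ) := by ring
    · -- Case 3
      have hapos : 0 < a := by linarith
      have ha1 : (1:ℝ) ≤ a := by
        have hm0 : m ≠ 0 := by
          intro h0
          rw [hadef, h0] at hapos
          simp at hapos
        show (1:ℝ) ≤ (m:ℝ)
        exact_mod_cast Nat.one_le_iff_ne_zero.2 hm0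
      have hNa : N < a := by
        rcases hn with h0 | hlt
        · exfalso
          have hmz : m = 0 := by rw [hmdef, h0]; rfl
          have : a = 0 := by rw [hadef, hmz]; norm_num
          linarith
        · rwa [ham] at hlt
      set u : ℝ := 4*t/a with hu
      have hu0 : 0 < u := by rw [hu]; positivity
      have hu1 : u ≤ 1 := by
        rw [hu]
        exact div_le_one_of_le₀ (by linarith) ha0
      set lam : ℝ := Real.log (a/(2*t)) with hlam
      have hfrac8 : (8:ℝ) ≤ a/(2*t) := by
        rw [le_div_iff₀ (show (0:ℝ) < 2*t by linarith)]
        linarith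
      have hlam0 : 0 ≤ lam := Real.log_nonneg (by linarith)
      have hexplam : Real.exp lam = a/(2*t) := Real.exp_log (by positivity)
      have hexpnlam : Real.exp (-lam) = 2*t/a := by
        rw [Real.exp_neg, hexplam, inv_div]
      have hcosh : t * Real.cosh lam = a/4 + t^2/a := by
        rw [Real.cosh_eq, hexplam, hexpnlam]
        field_simp
        ring
      have htcosh : a/4 ≤ t * Real.cosh lam := by
        rw [hcosh]
        have : 0 ≤ t^2/a := by positivity
        linarith
      have hpow1 : (t*Real.cosh lam)^(-(1/2):ℝ) ≤ 2 := by
        calc (t*Real.cosh lam)^(-(1/2):ℝ) ≤ ((1:ℝ)/4)^(-(1/2):ℝ) := by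
              apply Real.rpow_le_rpow_of_nonpos (by norm_num) ?_ (by norm_num)
              calc (1:ℝ)/4 ≤ a/4 := by linarith
              _ ≤ t * Real.cosh lam := htcosh
        _ = 2 := by
              rw [Real.rpow_neg (by norm_num), ← Real.sqrt_eq_rpow,
                show (1/4:ℝ) = (1/2)^2 by norm_num, Real.sqrt_sq (by norm_num)]
              norm_num
      have hma : (m:ℝ) = a := hadef.symm
      have hE : 2*t*(Real.cosh lam - 1) - (m:ℝ)*lam ≤ (5/8)*a - a*lam := by
        have h256 : t^2/a ≤ a/256 := by
          rw [div_le_div_iff₀ hapos (by norm_num : (0:ℝ) < 256)]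
          nlinarith [hat, ht.le, hapos.le]
        have hexp2 : 2*t*Real.cosh lam = a/2 + 2*(t^2/a) := by
          rw [show 2*t*Real.cosh lam = 2*(t*Real.cosh lam) by ring, hcosh]; ring
        rw [hma]
        linarith only [hexp2, h256, ht, hapos]
      have hEbound : Real.exp (2*t*(Real.cosh lam - 1) - (m:ℝ)*lam)
          ≤ (Real.exp (-1/16) * u)^m := by
        calc Real.exp (2*t*(Real.cosh lam - 1) - (m:ℝ)*lam)
            ≤ Real.exp ((5/8)*a - a*lam) := Real.exp_le_exp.2 hE
        _ = (Real.exp (5/8) * Real.exp (-lam))^m := by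
            rw [← Real.exp_add, ← Real.exp_nat_mul]
            congr 1
            rw [← hma]
            ring
        _ ≤ (Real.exp (-1/16) * u)^m := by
            apply pow_le_pow_left₀ (by positivity) ?_ m
            rw [hexpnlam, hu]
            have h2 : Real.exp (11/16) ≤ 2 := by
              have hl2 := Real.log_two_gt_d9
              calc Real.exp (11/16) ≤ Real.exp (Real.log 2) := Real.exp_le_exp.2 (by linarith)
              _ = 2 := Real.exp_log (by norm_num)
            have h58 : Real.exp (5/8) ≤ 2 * Real.exp (-1/16) := by
              calc Real.exp (5/8) = Real.exp (11/16) * Real.exp (-1/16) := by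
                    rw [← Real.exp_add]; norm_num
              _ ≤ 2 * Real.exp (-1/16) := mul_le_mul_of_nonneg_right h2 (Real.exp_nonneg _)
            have hta : (0:ℝ) ≤ t/a := by positivity
            calc Real.exp (5/8) * (2*t/a) = (t/a) * (2 * Real.exp (5/8)) := by ring
            _ ≤ (t/a) * (4 * Real.exp (-1/16)) := mul_le_mul_of_nonneg_left (by linarith) hta
            _ = Real.exp (-1/16) * (4*t/a) := by ring
      have hb2 : |heatKernel t (m:ℤ)| ≤ 2 * (Real.exp (-1/16) * u)^m := by
        refine (hmaster lam).trans ?_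
        exact mul_le_mul hpow1 hEbound (Real.exp_nonneg _) (by norm_num)
      have hsplit : (Real.exp (-1/16) * u)^m = Real.exp (-(a/16)) * u^m := by
        rw [mul_pow, ← Real.exp_nat_mul,
          show ((m:ℕ):ℝ) * (-1/16) = -(a/16) by rw [hma]; ring]
      have hum : u^m ≤ u^(N:ℝ) := by
        rw [← Real.rpow_natCast u m]
        exact Real.rpow_le_rpow_of_exponent_ge hu0 hu1 (by rw [hma]; exact hNa.le)
      have hea : Real.exp (-(a/16)) ≤ (k.factorial:ℝ) * 16^k * a^(-(N+1):ℝ) := by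
        have hak : (a/16)^k ≤ (k.factorial:ℝ) * Real.exp (a/16) :=
          pow_le_factorial_mul_exp _ (by positivity) k
        have ha_k : a^k ≤ (k.factorial:ℝ) * 16^k * Real.exp (a/16) := by
          have h16a : a^k = 16^k * (a/16)^k := by
            rw [← mul_pow, mul_div_cancel₀ _ (by norm_num : (16:ℝ) ≠ 0)]
          rw [h16a]
          calc (16:ℝ)^k * (a/16)^k ≤ 16^k * ((k.factorial:ℝ) * Real.exp (a/16)) :=
                mul_le_mul_of_nonneg_left hak (by positivity)
          _ = (k.factorial:ℝ) * 16^k * Real.exp (a/16) := by ring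
        have hank : a^((N+1:ℝ)) ≤ a^(k:ℕ) := by
          rw [← Real.rpow_natCast a k]
          exact Real.rpow_le_rpow_of_exponent_le ha1 hkN
        have hcomb : Real.exp (-(a/16)) * a^((N+1:ℝ)) ≤ (k.factorial:ℝ) * 16^k := by
          calc Real.exp (-(a/16)) * a^((N+1:ℝ))
              ≤ Real.exp (-(a/16)) * a^(k:ℕ) :=
                mul_le_mul_of_nonneg_left hank (Real.exp_nonneg _)
          _ ≤ Real.exp (-(a/16)) * ((k.factorial:ℝ) * 16^k * Real.exp (a/16)) :=
                mul_le_mul_of_nonneg_left ha_k (Real.exp_nonneg _)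
          _ = ((k.factorial:ℝ) * 16^k) * (Real.exp (-(a/16)) * Real.exp (a/16)) := by ring
          _ = (k.factorial:ℝ) * 16^k := by
                rw [← Real.exp_add, show -(a/16) + a/16 = 0 by ring, Real.exp_zero, mul_one]
        have hpow2 : (0:ℝ) < a^((N+1:ℝ)) := Real.rpow_pos_of_pos hapos _
        rw [Real.rpow_neg hapos.le, le_mul_inv_iff₀ hpow2]
        exact hcomb
      have hstep : (Real.exp (-1/16) * u)^m
          ≤ ((k.factorial:ℝ) * 16^k) * (a^(-(N+1):ℝ) * u^(N:ℝ)) := by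
        calc (Real.exp (-1/16) * u)^m = Real.exp (-(a/16)) * u^m := hsplit
        _ ≤ ((k.factorial:ℝ) * 16^k * a^(-(N+1):ℝ)) * u^(N:ℝ) :=
            mul_le_mul hea hum (pow_nonneg hu0.le m) (by positivity)
        _ = ((k.factorial:ℝ) * 16^k) * (a^(-(N+1):ℝ) * u^(N:ℝ)) := by ring
      set B : ℝ := 2 * (((k.factorial:ℝ) * 16^k) * (a^(-(N+1):ℝ) * u^(N:ℝ))) with hB
      have hBle : |heatKernel t (m:ℤ)| ≤ B := by
        rw [hB]
        calc |heatKernel t (m:ℤ)| ≤ 2 * (Real.exp (-1/16) * u)^m := hb2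
        _ ≤ _ := mul_le_mul_of_nonneg_left hstep (by norm_num)
      refine hBle.trans ?_
      have hBpos : 0 < B := by
        rw [hB]
        have := Real.rpow_pos_of_pos hapos (-(N+1):ℝ)
        have := Real.rpow_pos_of_pos hu0 (N:ℝ)
        positivity
      have hRpos : 0 < C * t^(-(1/2):ℝ) * (1+x)^(-2*N-1:ℝ) := by
        have := Real.rpow_pos_of_pos h1x (-2*N-1:ℝ)
        positivity
      rw [← Real.log_le_log_iff hBpos hRpos]
      have l4 : Real.log (4:ℝ) = 2 * Real.log 2 := by
        rw [show (4:ℝ) = 2^(2:ℕ) by norm_num, Real.log_pow]; push_cast; ring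
      have l16 : Real.log (16:ℝ) = 4 * Real.log 2 := by
        rw [show (16:ℝ) = 2^(4:ℕ) by norm_num, Real.log_pow]; push_cast; ring
      have l32 : Real.log (32:ℝ) = 5 * Real.log 2 := by
        rw [show (32:ℝ) = 2^(5:ℕ) by norm_num, Real.log_pow]; push_cast; ring
      have hfacpos : (0:ℝ) < (k.factorial:ℝ) := by positivity
      have lB : Real.log B = Real.log 2 + Real.log (k.factorial:ℝ) + k * Real.log 16
          + (-(N+1)) * Real.log a + N * Real.log u := by
        rw [hB, Real.log_mul (by norm_num : (2:ℝ) ≠ 0) (by positivity),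
          Real.log_mul (by positivity) (by positivity),
          Real.log_mul hfacpos.ne' (by positivity),
          Real.log_mul (Real.rpow_pos_of_pos hapos _).ne' (Real.rpow_pos_of_pos hu0 _).ne',
          Real.log_pow, Real.log_rpow hapos, Real.log_rpow hu0]
        ring
      have lC : Real.log C = (4*N+2) * Real.log 2 + Real.log (k.factorial:ℝ) + k * Real.log 32 := by
        rw [hCdef, hCf, Real.log_mul (by positivity) (by positivity),
          Real.log_mul hfacpos.ne' (by positivity),
          Real.log_rpow (by norm_num : (0:ℝ) < 2), Real.log_pow]
        ring
      have lu2 : Real.log u = 2*Real.log 2 + Real.log t - Real.log a := by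
        rw [hu, Real.log_div (by positivity) hapos.ne',
          Real.log_mul (by norm_num : (4:ℝ) ≠ 0) ht.ne', l4]
      have hlx : Real.log (1+x) ≤ Real.log 2 + Real.log a - (1/2) * Real.log t := by
        have hxpos : 0 < x := by linarith
        calc Real.log (1+x) ≤ Real.log (2*x) :=
              (Real.log_le_log_iff h1x (by positivity)).2 (by linarith)
        _ = Real.log 2 + Real.log x := Real.log_mul (by norm_num) hxpos.ne'
        _ = Real.log 2 + Real.log a - (1/2)*Real.log t := by
            rw [hxdef, Real.log_div hapos.ne' hsqt.ne', Real.log_sqrt ht.le]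
            ring
      rw [Real.log_mul (mul_pos hCpos htm).ne' (Real.rpow_pos_of_pos h1x _).ne',
        Real.log_mul hCpos.ne' htm.ne',
        Real.log_rpow ht, Real.log_rpow h1x, lB, lC, l16, l32, lu2]
      have hA : (2*N+1) * Real.log (1+x) ≤ (2*N+1) * (Real.log 2 + Real.log a - (1/2)*Real.log t) :=
        mul_le_mul_of_nonneg_left hlx hM0
      have hkL2 : (0:ℝ) ≤ (k:ℝ) * Real.log 2 :=
        mul_nonneg (Nat.cast_nonneg k) (Real.log_nonneg one_le_two)
      linarith only [hA, hkL2]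
end

section
/- For every m ∈ ℕ there exists C_m > 0 such that for every function h : ℤ → ℂ with h(n) → 0 as n → +∞ and as n → −∞, one has sup_{n∈ℤ} (1+|n|)^m |h(n)| ≤ C_m · min( sup_{n∈ℤ} (1+|n|)^{m+2} |D h(n)| , sup_{n∈ℤ} (1+|n|)^{m+2} |D* h(n)| ). -/
open Filter ENNReal

private lemma aux_real_sum : ∀ N : ℕ, ∑ i ∈ Finset.range (N+1), (1 / (1 + (i:ℝ))^2) ≤ (2:ℝ) - 1/((N:ℝ)+1) := by
  intro N
  induction N with
  | zero => norm_num
  | succ N ih =>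
    rw [Finset.sum_range_succ]
    have h1 : (0:ℝ) < (N:ℝ) + 1 := by positivity
    have h2 : (0:ℝ) < (N:ℝ) + 2 := by positivity
    have key : 1 / (1 + ((N:ℝ)+1))^2 ≤ 1/((N:ℝ)+1) - 1/((N:ℝ)+1+1) := by
      have e : 1/((N:ℝ)+1) - 1/((N:ℝ)+1+1) = 1/(((N:ℝ)+1)*((N:ℝ)+1+1)) := by
        field_simp
        ring
      rw [e]
      apply one_div_le_one_div_of_le (by positivity)
      nlinarith
    push_cast
    push_cast at ih key
    linarith [ih, key]

private lemma aux_sum_sq : (∑' k : ℕ, ENNReal.ofReal (1 / (1 + (k:ℝ))^2)) ≤ 2 := by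
  apply ENNReal.tsum_le_of_sum_range_le
  intro N
  have hsum : ∑ i ∈ Finset.range N, (1 / (1 + (i:ℝ))^2) ≤ 2 := by
    cases N with
    | zero => norm_num
    | succ N => linarith [aux_real_sum N, one_div_pos.mpr (show (0:ℝ) < (N:ℝ)+1 by positivity)]
  calc ∑ i ∈ Finset.range N, ENNReal.ofReal (1 / (1 + (i:ℝ))^2)
      = ENNReal.ofReal (∑ i ∈ Finset.range N, (1 / (1 + (i:ℝ))^2)) := by
        rw [ENNReal.ofReal_sum_of_nonneg]
        intro i _; positivity
    _ ≤ ENNReal.ofReal 2 := ENNReal.ofReal_le_ofReal hsum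
    _ = 2 := by norm_num

private lemma calc_bound (m : ℕ) (S : ℝ≥0∞) (n : ℤ) (j : ℕ → ℤ)
    (hj1 : ∀ k, |(n:ℝ)| ≤ |(j k : ℝ)|) (hj2 : ∀ k : ℕ, (k:ℝ) ≤ |(j k : ℝ)|)
    (u : ℕ → ℝ≥0∞)
    (hu : ∀ k, u k * ENNReal.ofReal ((1 + |(j k : ℝ)|) ^ (m+2)) ≤ S) :
    ENNReal.ofReal ((1 + |(n:ℝ)|) ^ m) * ∑' k, u k ≤ 2 * S := by
  rw [← ENNReal.tsum_mul_left]
  have step : ∀ k : ℕ, ENNReal.ofReal ((1 + |(n:ℝ)|) ^ m) * u k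
      ≤ ENNReal.ofReal (1/(1+(k:ℝ))^2) * S := by
    intro k
    have hW0 : (0:ℝ) ≤ (1 + |(j k : ℝ)|) ^ (m+2) := by positivity
    have hA : (1 + |(n:ℝ)|) ^ m ≤ (1 + |(j k : ℝ)|) ^ (m+2) * (1/(1+(k:ℝ))^2) := by
      rw [mul_one_div, le_div_iff₀ (by positivity), pow_add]
      exact mul_le_mul (pow_le_pow_left₀ (by positivity) (by linarith [hj1 k, abs_nonneg (n:ℝ)]) m)
        (pow_le_pow_left₀ (by positivity) (by linarith [hj2 k]) 2) (by positivity) (by positivity)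
    calc ENNReal.ofReal ((1 + |(n:ℝ)|) ^ m) * u k
        ≤ (ENNReal.ofReal ((1 + |(j k:ℝ)|)^(m+2)) * ENNReal.ofReal (1/(1+(k:ℝ))^2)) * u k := by
          refine mul_le_mul_left ?_ _
          rw [← ENNReal.ofReal_mul hW0]
          exact ENNReal.ofReal_le_ofReal hA
      _ = ENNReal.ofReal (1/(1+(k:ℝ))^2) * (u k * ENNReal.ofReal ((1 + |(j k:ℝ)|)^(m+2))) := by
          ring
      _ ≤ ENNReal.ofReal (1/(1+(k:ℝ))^2) * S := mul_le_mul_right (hu k) _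
  calc ∑' k : ℕ, ENNReal.ofReal ((1 + |(n:ℝ)|) ^ m) * u k
      ≤ ∑' k : ℕ, ENNReal.ofReal (1/(1+(k:ℝ))^2) * S := ENNReal.tsum_le_tsum step
    _ = (∑' k : ℕ, ENNReal.ofReal (1/(1+(k:ℝ))^2)) * S := ENNReal.tsum_mul_right
    _ ≤ 2 * S := mul_le_mul_left aux_sum_sq _

private lemma tele_pos (h : ℤ → ℂ) (h1 : Tendsto h atTop (nhds 0)) (n : ℤ) :
    ENNReal.ofReal ‖h n‖ ≤ ∑' k : ℕ, ENNReal.ofReal ‖h (n + k + 1) - h (n + k)‖ := by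
  set T := ∑' k : ℕ, ENNReal.ofReal ‖h (n + k + 1) - h (n + k)‖ with hT
  have hb : ∀ N : ℕ, ENNReal.ofReal ‖h n‖ ≤ ENNReal.ofReal ‖h (n + N)‖ + T := by
    intro N
    have htel : h (n + N) - h n = ∑ k ∈ Finset.range N, (h (n + k + 1) - h (n + k)) := by
      induction N with
      | zero => simp
      | succ N ih =>
        rw [Finset.sum_range_succ, ← ih]
        have e : n + ((N:ℤ)+1) = n + N + 1 := by ring
        push_cast
        rw [e]; ring
    have t1 : ‖h n‖ ≤ ‖h (n+N)‖ + ‖h (n+N) - h n‖ := by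
      have := norm_sub_le (h (n+N)) (h (n+N) - h n)
      simpa [sub_sub_cancel] using this
    calc ENNReal.ofReal ‖h n‖ ≤ ENNReal.ofReal (‖h (n+N)‖ + ‖h (n+N) - h n‖) :=
          ENNReal.ofReal_le_ofReal t1
      _ ≤ ENNReal.ofReal ‖h (n+N)‖ + ENNReal.ofReal ‖h (n+N) - h n‖ := ENNReal.ofReal_add_le
      _ ≤ ENNReal.ofReal ‖h (n+N)‖ + T := by
          refine add_le_add le_rfl ?_
          rw [htel]
          calc ENNReal.ofReal ‖∑ k ∈ Finset.range N, (h (n + k + 1) - h (n + k))‖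
              = (‖∑ k ∈ Finset.range N, (h (n + k + 1) - h (n + k))‖₊ : ℝ≥0∞) :=
                ofReal_norm _
            _ ≤ ∑ k ∈ Finset.range N, (‖h (n + k + 1) - h (n + k)‖₊ : ℝ≥0∞) := by
                exact_mod_cast nnnorm_sum_le _ _
            _ = ∑ k ∈ Finset.range N, ENNReal.ofReal ‖h (n + k + 1) - h (n + k)‖ :=
                Finset.sum_congr rfl fun k _ => (ofReal_norm _).symm
            _ ≤ T := ENNReal.sum_le_tsum _
  have hmono : Tendsto (fun N : ℕ => n + (N:ℤ)) atTop atTop :=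
    tendsto_atTop_add_const_left atTop n tendsto_natCast_atTop_atTop
  have hlim0 : Tendsto (fun N : ℕ => ENNReal.ofReal ‖h (n + N)‖) atTop (nhds 0) := by
    have : Tendsto (fun N : ℕ => ‖h (n + N)‖) atTop (nhds 0) := by
      simpa using (h1.comp hmono).norm
    have := (ENNReal.continuous_ofReal.tendsto 0).comp this
    rw [ENNReal.ofReal_zero] at this
    exact this
  have hlim : Tendsto (fun N : ℕ => ENNReal.ofReal ‖h (n + N)‖ + T) atTop (nhds (0 + T)) :=
    hlim0.add tendsto_const_nhds
  have := ge_of_tendsto' hlim hb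
  simpa using this

private lemma tele_neg (h : ℤ → ℂ) (h2 : Tendsto h atBot (nhds 0)) (n : ℤ) :
    ENNReal.ofReal ‖h n‖ ≤ ∑' k : ℕ, ENNReal.ofReal ‖h (n - k) - h (n - k - 1)‖ := by
  set T := ∑' k : ℕ, ENNReal.ofReal ‖h (n - k) - h (n - k - 1)‖ with hT
  have hb : ∀ N : ℕ, ENNReal.ofReal ‖h n‖ ≤ ENNReal.ofReal ‖h (n - N)‖ + T := by
    intro N
    have htel : h n - h (n - N) = ∑ k ∈ Finset.range N, (h (n - k) - h (n - k - 1)) := by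
      induction N with
      | zero => simp
      | succ N ih =>
        rw [Finset.sum_range_succ, ← ih]
        have e : n - ((N:ℤ)+1) = n - N - 1 := by ring
        push_cast
        rw [e]; ring
    have t1 : ‖h n‖ ≤ ‖h (n-N)‖ + ‖h n - h (n-N)‖ := by
      have := norm_add_le (h (n-N)) (h n - h (n-N))
      simpa [add_sub_cancel] using this
    calc ENNReal.ofReal ‖h n‖ ≤ ENNReal.ofReal (‖h (n-N)‖ + ‖h n - h (n-N)‖) :=
          ENNReal.ofReal_le_ofReal t1
      _ ≤ ENNReal.ofReal ‖h (n-N)‖ + ENNReal.ofReal ‖h n - h (n-N)‖ := ENNReal.ofReal_add_le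
      _ ≤ ENNReal.ofReal ‖h (n-N)‖ + T := by
          refine add_le_add le_rfl ?_
          rw [htel]
          calc ENNReal.ofReal ‖∑ k ∈ Finset.range N, (h (n - k) - h (n - k - 1))‖
              = (‖∑ k ∈ Finset.range N, (h (n - k) - h (n - k - 1))‖₊ : ℝ≥0∞) :=
                ofReal_norm _
            _ ≤ ∑ k ∈ Finset.range N, (‖h (n - k) - h (n - k - 1)‖₊ : ℝ≥0∞) := by
                exact_mod_cast nnnorm_sum_le _ _
            _ = ∑ k ∈ Finset.range N, ENNReal.ofReal ‖h (n - k) - h (n - k - 1)‖ :=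
                Finset.sum_congr rfl fun k _ => (ofReal_norm _).symm
            _ ≤ T := ENNReal.sum_le_tsum _
  have hmono : Tendsto (fun N : ℕ => n - (N:ℤ)) atTop atBot := by
    have : Tendsto (fun N : ℕ => -(N:ℤ)) atTop atBot :=
      tendsto_neg_atTop_atBot.comp tendsto_natCast_atTop_atTop
    simpa [sub_eq_add_neg] using tendsto_atBot_add_const_left atTop n this
  have hlim0 : Tendsto (fun N : ℕ => ENNReal.ofReal ‖h (n - N)‖) atTop (nhds 0) := by
    have : Tendsto (fun N : ℕ => ‖h (n - N)‖) atTop (nhds 0) := by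
      simpa using (h2.comp hmono).norm
    have := (ENNReal.continuous_ofReal.tendsto 0).comp this
    rw [ENNReal.ofReal_zero] at this
    exact this
  have hlim : Tendsto (fun N : ℕ => ENNReal.ofReal ‖h (n - N)‖ + T) atTop (nhds (0 + T)) :=
    hlim0.add tendsto_const_nhds
  have := ge_of_tendsto' hlim hb
  simpa using this

private lemma keyD (m : ℕ) (h : ℤ → ℂ) (h1 : Tendsto h atTop (nhds 0))
    (h2 : Tendsto h atBot (nhds 0)) :
    (⨆ n : ℤ, ENNReal.ofReal ((1 + |(n : ℝ)|) ^ m * ‖h n‖)) ≤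
      2 * ⨆ n : ℤ, ENNReal.ofReal ((1 + |(n : ℝ)|) ^ (m + 2) * ‖h (n + 1) - h n‖) := by
  set S := ⨆ n : ℤ, ENNReal.ofReal ((1 + |(n : ℝ)|) ^ (m + 2) * ‖h (n + 1) - h n‖) with hS
  have hd : ∀ j : ℤ,
      ENNReal.ofReal ‖h (j+1) - h j‖ * ENNReal.ofReal ((1 + |(j:ℝ)|)^(m+2)) ≤ S := by
    intro j
    rw [← ENNReal.ofReal_mul (norm_nonneg _), mul_comm]
    exact le_iSup (fun n : ℤ => ENNReal.ofReal ((1 + |(n : ℝ)|) ^ (m + 2) * ‖h (n + 1) - h n‖)) j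
  refine iSup_le fun n => ?_
  rw [ENNReal.ofReal_mul (by positivity)]
  rcases le_or_gt 0 n with hn | hn
  · refine le_trans (mul_le_mul_right (tele_pos h h1 n) _) ?_
    have hn' : (0:ℝ) ≤ (n:ℝ) := by exact_mod_cast hn
    refine calc_bound m S n (fun k => n + k) ?_ ?_ _ ?_
    · intro k
      have hk : (0:ℝ) ≤ (k:ℝ) := Nat.cast_nonneg k
      push_cast
      rw [abs_of_nonneg hn', abs_of_nonneg (by linarith)]
      linarith
    · intro k
      have hk : (0:ℝ) ≤ (k:ℝ) := Nat.cast_nonneg k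
      push_cast
      rw [abs_of_nonneg (by linarith)]
      linarith
    · intro k
      exact hd (n + k)
  · refine le_trans (mul_le_mul_right (tele_neg h h2 n) _) ?_
    have hn' : (n:ℝ) ≤ 0 := by exact_mod_cast hn.le
    refine calc_bound m S n (fun k => n - k - 1) ?_ ?_ _ ?_
    · intro k
      have hk : (0:ℝ) ≤ (k:ℝ) := Nat.cast_nonneg k
      push_cast
      rw [abs_of_nonpos hn', abs_of_nonpos (by linarith)]
      linarith
    · intro k
      have hk : (0:ℝ) ≤ (k:ℝ) := Nat.cast_nonneg k
      push_cast
      rw [abs_of_nonpos (by linarith)]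
      linarith
    · intro k
      have := hd (n - k - 1)
      have e : n - (k:ℤ) - 1 + 1 = n - k := by ring
      rw [e] at this
      exact this

private lemma keyDstar (m : ℕ) (h : ℤ → ℂ) (h1 : Tendsto h atTop (nhds 0))
    (h2 : Tendsto h atBot (nhds 0)) :
    (⨆ n : ℤ, ENNReal.ofReal ((1 + |(n : ℝ)|) ^ m * ‖h n‖)) ≤
      2 * ⨆ n : ℤ, ENNReal.ofReal ((1 + |(n : ℝ)|) ^ (m + 2) * ‖h n - h (n - 1)‖) := by
  have hg1 : Tendsto (fun n : ℤ => h (-n)) atTop (nhds 0) := h2.comp tendsto_neg_atTop_atBot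
  have hg2 : Tendsto (fun n : ℤ => h (-n)) atBot (nhds 0) := h1.comp tendsto_neg_atBot_atTop
  have key := keyD m (fun n => h (-n)) hg1 hg2
  refine le_trans ?_ (le_trans key ?_)
  · refine iSup_le fun n => le_trans ?_ (le_iSup
      (fun n : ℤ => ENNReal.ofReal ((1 + |(n : ℝ)|) ^ m * ‖h (-n)‖)) (-n))
    apply le_of_eq
    congr 1
    push_cast
    rw [abs_neg, neg_neg]
  · refine mul_le_mul_right (iSup_le fun n => ?_) 2
    refine le_trans ?_ (le_iSup
      (fun n : ℤ => ENNReal.ofReal ((1 + |(n : ℝ)|) ^ (m + 2) * ‖h n - h (n - 1)‖)) (-n))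
    show ENNReal.ofReal ((1 + |(n : ℝ)|) ^ (m + 2) * ‖h (-(n+1)) - h (-n)‖) ≤
      ENNReal.ofReal ((1 + |((-n : ℤ) : ℝ)|) ^ (m + 2) * ‖h (-n) - h (-n - 1)‖)
    apply le_of_eq
    have e : -(n+1) = -n - 1 := by ring
    rw [e, norm_sub_rev]
    congr 1
    push_cast
    rw [abs_neg]

/-- For every `m ∈ ℕ` there is `C_m > 0` such that for every `h : ℤ → ℂ` with
`h(n) → 0` as `n → ±∞`:
`sup_n (1+|n|)^m |h(n)| ≤ C_m · min( sup_n (1+|n|)^{m+2} |D h(n)|, sup_n (1+|n|)^{m+2} |D* h(n)| )`,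
where `D h(n) = h(n+1) - h(n)` and `D* h(n) = h(n) - h(n-1)` (suprema taken in `ℝ≥0∞`). -/
theorem stmt15 (m : ℕ) :
    ∃ C : ℝ, 0 < C ∧ ∀ h : ℤ → ℂ,
      Tendsto h atTop (nhds 0) → Tendsto h atBot (nhds 0) →
      (⨆ n : ℤ, ENNReal.ofReal ((1 + |(n : ℝ)|) ^ m * ‖h n‖)) ≤
        ENNReal.ofReal C *
          min (⨆ n : ℤ, ENNReal.ofReal ((1 + |(n : ℝ)|) ^ (m + 2) * ‖h (n + 1) - h n‖))
              (⨆ n : ℤ, ENNReal.ofReal ((1 + |(n : ℝ)|) ^ (m + 2) * ‖h n - h (n - 1)‖)) := by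
  refine ⟨2, two_pos, fun h h1 h2 => ?_⟩
  have h2' : ENNReal.ofReal (2:ℝ) = 2 := by norm_num
  rw [h2']
  rcases min_cases (⨆ n : ℤ, ENNReal.ofReal ((1 + |(n : ℝ)|) ^ (m + 2) * ‖h (n + 1) - h n‖))
      (⨆ n : ℤ, ENNReal.ofReal ((1 + |(n : ℝ)|) ^ (m + 2) * ‖h n - h (n - 1)‖)) with
    ⟨he, _⟩ | ⟨he, _⟩ <;> rw [he]
  · exact keyD m h h1 h2
  · exact keyDstar m h h1 h2
end
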